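/- Let a, b, c be pairwise distinct real numbers and let α ≠ 0 and β ≠ 0. Then R_{α,β,0} = { (x, βx/(2(a−b)x+α), 0) : x ∈ ℝ, 2(a−b)x+α ≠ 0 } ∪ { (−α/(2(a−c)), −β/(2(b−c)), z) : z ∈ ℝ }, and these two sets intersect in exactly one point, namely (−α/(2(a−c)), −β/(2(b−c)), 0). -/

import Mathlib

/-!
A `2 × n` matrix has rank at most one iff its two rows are linearly dependent, i.e. iff all its
`2 × 2` minors vanish. For `γ = 0` the three minors of `F_{α,β,0}(x,y,z)` are
`(2(a-b)x + α) y - βx`, `(2(a-c)x + α) z` and `(2(b-c)y + β) z`. If `z = 0` only the first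
survives, and since `αβ ≠ 0` it describes the graph `y = βx / (2(a-b)x + α)`; if `z ≠ 0` the last
two pin `(x, y)` to the point `(-α/(2(a-c)), -β/(2(b-c)))`, which also lies on that graph.
-/

open Matrix Module

theorem Matrix.rank_lt_card_height_iff {m n K : Type*} [Field K] [Fintype m] [Fintype n]
    (M : Matrix m n K) :
    M.rank < Fintype.card m ↔ ¬ LinearIndependent K M.row := by
  rw [rank_eq_finrank_span_row, linearIndependent_iff_card_eq_finrank_span]
  have := finrank_range_le_card (R := K) M.row
  unfold Set.finrank at this ⊢
  omega

theorem not_linearIndependent_pair_iff {n K : Type*} [Field K] (u v : n → K) :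
    ¬ LinearIndependent K ![u, v] ↔ ∀ i j, u i * v j = u j * v i := by
  rw [LinearIndependent.pair_iff]
  push Not
  constructor
  · rintro ⟨s, t, hst, hne⟩ i j
    have hi : s * u i + t * v i = 0 := congrFun hst i
    have hj : s * u j + t * v j = 0 := congrFun hst j
    rcases eq_or_ne s 0 with rfl | hs
    · exact mul_left_cancel₀ (hne rfl) (by linear_combination u i * hj - u j * hi)
    · exact mul_left_cancel₀ hs (by linear_combination v j * hi - v i * hj)
  · intro h
    rcases eq_or_ne v 0 with rfl | hv
    · exact ⟨0, 1, by simp, fun _ => one_ne_zero⟩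
    · obtain ⟨k, hk⟩ := Function.ne_iff.1 hv
      refine ⟨v k, -u k, funext fun i => ?_, fun h => absurd h hk⟩
      simp only [Pi.add_apply, Pi.smul_apply, smul_eq_mul, Pi.zero_apply]
      linear_combination h i k

theorem rank_two_by_three_le_one_iff {K : Type*} [Field K] (p q r x y z : K) :
    (!![p, q, r; x, y, z]).rank ≤ 1 ↔ p * y = q * x ∧ p * z = r * x ∧ q * z = r * y := by
  have h := rank_lt_card_height_iff !![p, q, r; x, y, z]
  rw [Fintype.card_fin] at h
  rw [Nat.le_iff_lt_add_one, h, show (!![p, q, r; x, y, z]).row = ![![p, q, r], ![x, y, z]] from rfl,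
    not_linearIndependent_pair_iff]
  simp only [Fin.forall_fin_succ, Fin.isValue, cons_val_zero, cons_val_succ, cons_val_fin_one,
    forall_const, true_and, and_true]
  exact ⟨fun h => ⟨h.1.1, h.1.2, h.2.1.2⟩, fun ⟨h₁, h₂, h₃⟩ => ⟨⟨h₁, h₂⟩, ⟨h₁.symm, h₃⟩, h₂.symm, h₃.symm⟩⟩

theorem mul_add_eq_zero_iff_eq_neg_div {K : Type*} [Field K] {d x e : K} (hd : d ≠ 0) :
    d * x + e = 0 ↔ x = -e / d := by
  rw [eq_div_iff hd, mul_comm, ← eq_neg_iff_add_eq_zero]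

section RelativeEquilibria

variable {a b c α β x y z : ℝ}

theorem rank_relEquilibriumMatrix_le_one_iff :
    (!![2*a*x + α, 2*b*y + β, 2*c*z; x, y, z] : Matrix (Fin 2) (Fin 3) ℝ).rank ≤ 1 ↔
      (2*(a-b)*x + α) * y = β * x ∧ (2*(a-c)*x + α) * z = 0 ∧ (2*(b-c)*y + β) * z = 0 := by
  rw [rank_two_by_three_le_one_iff]
  refine and_congr ?_ (and_congr ?_ ?_) <;> constructor <;> intro h <;> linear_combination h

theorem curve_equation_iff (hα : α ≠ 0) (hβ : β ≠ 0) :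
    (2*(a-b)*x + α) * y = β * x ↔ 2*(a-b)*x + α ≠ 0 ∧ y = β * x / (2*(a-b)*x + α) := by
  refine ⟨fun h => ?_, fun ⟨hd, hy⟩ => by rw [hy, mul_div_cancel₀ _ hd]⟩
  have hd : 2*(a-b)*x + α ≠ 0 := by
    intro hd
    have hx : x = 0 := by simpa [hd, hβ, eq_comm] using h
    simp [hx, hα] at hd
  exact ⟨hd, by rw [eq_div_iff hd, mul_comm, h]⟩

theorem curve_denom_at_pitchfork (hac : a ≠ c) :
    2*(a-b)*(-α / (2*(a-c))) + α = α * (b-c) / (a-c) := by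
  have : a - c ≠ 0 := sub_ne_zero.2 hac
  field_simp
  ring

theorem curve_through_pitchfork (hbc : b ≠ c) (hac : a ≠ c) (hα : α ≠ 0) :
    2*(a-b)*(-α / (2*(a-c))) + α ≠ 0 ∧
      β * (-α / (2*(a-c))) / (2*(a-b)*(-α / (2*(a-c))) + α) = -β / (2*(b-c)) := by
  have hac' : a - c ≠ 0 := sub_ne_zero.2 hac
  have hbc' : b - c ≠ 0 := sub_ne_zero.2 hbc
  rw [curve_denom_at_pitchfork hac]
  refine ⟨by positivity, ?_⟩
  field_simp

end RelativeEquilibria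

theorem stmt_7_general (a b c α β : ℝ) (hbc : b ≠ c) (hac : a ≠ c)
    (hα : α ≠ 0) (hβ : β ≠ 0) :
    ({p : ℝ × ℝ × ℝ |
        (!![2*a*p.1 + α, 2*b*p.2.1 + β, 2*c*p.2.2; p.1, p.2.1, p.2.2] :
          Matrix (Fin 2) (Fin 3) ℝ).rank ≤ 1} =
      {q : ℝ × ℝ × ℝ | ∃ x : ℝ, 2*(a-b)*x + α ≠ 0 ∧
          q = (x, β*x / (2*(a-b)*x + α), 0)} ∪
      {q : ℝ × ℝ × ℝ | ∃ z : ℝ, q = (-α / (2*(a-c)), -β / (2*(b-c)), z)}) ∧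
    ({q : ℝ × ℝ × ℝ | ∃ x : ℝ, 2*(a-b)*x + α ≠ 0 ∧
          q = (x, β*x / (2*(a-b)*x + α), 0)} ∩
      {q : ℝ × ℝ × ℝ | ∃ z : ℝ, q = (-α / (2*(a-c)), -β / (2*(b-c)), z)} =
      {(-α / (2*(a-c)), -β / (2*(b-c)), 0)}) := by
  have hac₂ : 2*(a-c) ≠ 0 := mul_ne_zero two_ne_zero (sub_ne_zero.2 hac)
  have hbc₂ : 2*(b-c) ≠ 0 := mul_ne_zero two_ne_zero (sub_ne_zero.2 hbc)
  obtain ⟨hden₀, hy₀⟩ := curve_through_pitchfork (β := β) hbc hac hα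
  refine ⟨Set.ext fun ⟨x, y, z⟩ => ?_, Set.ext fun q => ?_⟩
  · simp only [Set.mem_ofPred_eq, Set.mem_union, Prod.mk.injEq, rank_relEquilibriumMatrix_le_one_iff,
      curve_equation_iff hα hβ, mul_eq_zero, mul_add_eq_zero_iff_eq_neg_div hac₂,
      mul_add_eq_zero_iff_eq_neg_div hbc₂]
    constructor
    · rintro ⟨⟨hd, hy⟩, hx, hy'⟩
      rcases eq_or_ne z 0 with rfl | hz
      · exact Or.inl ⟨x, hd, rfl, hy, rfl⟩
      · exact Or.inr ⟨z, hx.resolve_right hz, hy'.resolve_right hz, rfl⟩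
    · rintro (⟨x, hd, rfl, rfl, rfl⟩ | ⟨z, rfl, rfl, rfl⟩)
      · exact ⟨⟨hd, rfl⟩, Or.inr rfl, Or.inr rfl⟩
      · exact ⟨⟨hden₀, hy₀.symm⟩, Or.inl rfl, Or.inl rfl⟩
  · simp only [Set.mem_inter_iff, Set.mem_ofPred_eq, Set.mem_singleton_iff]
    constructor
    · rintro ⟨⟨x, -, rfl⟩, z, h⟩
      simp only [Prod.mk.injEq] at h
      rw [h.2.1, h.1]
    · rintro rfl
      exact ⟨⟨_, hden₀, by rw [hy₀]⟩, 0, rfl⟩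

/-- For pairwise distinct `a b c` and `α ≠ 0`, `β ≠ 0`, the set
`R_{α,β,0}` is the union of a curve in the plane `z = 0` and a vertical line, and
these two pieces intersect in exactly the single point
`(−α/(2(a−c)), −β/(2(b−c)), 0)`. -/
theorem stmt_7 (a b c α β : ℝ) (hab : a ≠ b) (hbc : b ≠ c) (hac : a ≠ c)
    (hα : α ≠ 0) (hβ : β ≠ 0) :
    ({p : ℝ × ℝ × ℝ |
        (!![2*a*p.1 + α, 2*b*p.2.1 + β, 2*c*p.2.2; p.1, p.2.1, p.2.2] :
          Matrix (Fin 2) (Fin 3) ℝ).rank ≤ 1} =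
      {q : ℝ × ℝ × ℝ | ∃ x : ℝ, 2*(a-b)*x + α ≠ 0 ∧
          q = (x, β*x / (2*(a-b)*x + α), 0)} ∪
      {q : ℝ × ℝ × ℝ | ∃ z : ℝ, q = (-α / (2*(a-c)), -β / (2*(b-c)), z)}) ∧
    ({q : ℝ × ℝ × ℝ | ∃ x : ℝ, 2*(a-b)*x + α ≠ 0 ∧
          q = (x, β*x / (2*(a-b)*x + α), 0)} ∩
      {q : ℝ × ℝ × ℝ | ∃ z : ℝ, q = (-α / (2*(a-c)), -β / (2*(b-c)), z)} =
      {(-α / (2*(a-c)), -β / (2*(b-c)), 0)}) :=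
  stmt_7_general a b c α β hbc hac hα hβ
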